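/- arXiv:2309.16213 — 2 statements merged into one kernel-verified Lean document; each statement's English description precedes it below -/
import Mathlib

section
/- There is a constant C > 0 such that for all signs μ₁, μ₂ ∈ {+1,-1} and all ξ₁, ξ₂ ∈ ℝ, |Φ_{μ₁μ₂}(ξ₁,ξ₂)|⁻¹ ≤ C(1 + min{|ξ₁+ξ₂|, |ξ₁|, |ξ₂|}), where Φ_{μ₁μ₂}(ξ₁,ξ₂) = -Λ(ξ₁+ξ₂) + μ₁Λ(ξ₁) + μ₂Λ(ξ₂) and Λ(ξ) = √(1+ξ²). -/
/-- Λ(ξ) = √(1+ξ²) -/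
noncomputable def Lam (ξ : ℝ) : ℝ := Real.sqrt (1 + ξ ^ 2)

lemma lam_sq (x : ℝ) : Lam x ^ 2 = 1 + x ^ 2 := Real.sq_sqrt (by positivity)

lemma one_le_lam (x : ℝ) : 1 ≤ Lam x := by
  have := Real.sqrt_le_sqrt (show (1:ℝ) ≤ 1 + x ^ 2 by nlinarith [sq_nonneg x])
  simpa [Lam] using this

lemma abs_le_lam (x : ℝ) : |x| ≤ Lam x := by
  rw [Lam, ← Real.sqrt_sq_eq_abs]
  exact Real.sqrt_le_sqrt (by nlinarith)

lemma lam_le (x : ℝ) : Lam x ≤ 1 + |x| := by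
  rw [Lam]
  have h : 1 + x ^ 2 ≤ (1 + |x|) ^ 2 := by nlinarith [abs_nonneg x, sq_abs x]
  calc Real.sqrt (1 + x ^ 2) ≤ Real.sqrt ((1 + |x|) ^ 2) := Real.sqrt_le_sqrt h
    _ = 1 + |x| := Real.sqrt_sq (by positivity)

lemma lam_even (x : ℝ) : Lam (-x) = Lam x := by simp [Lam]

lemma lam_add_le (a b : ℝ) : Lam (a + b) ≤ Lam b + |a| := by
  have hnn : 0 ≤ Lam b + |a| := by nlinarith [one_le_lam b, abs_nonneg a]
  rw [show Lam b + |a| = Real.sqrt ((Lam b + |a|) ^ 2) from (Real.sqrt_sq hnn).symm, Lam]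
  apply Real.sqrt_le_sqrt
  nlinarith [lam_sq b, mul_le_mul_of_nonneg_right (abs_le_lam b) (abs_nonneg a),
    abs_mul b a, le_abs_self (b * a), sq_abs a, sq_abs b]

lemma estA (a b : ℝ) : 1 / (2 * (1 + |a|)) ≤ Lam a + Lam b - Lam (a + b) := by
  have h1 : Lam (a + b) ≤ Lam b + |a| := lam_add_le a b
  have h2 : (Lam a - |a|) * (Lam a + |a|) = 1 := by nlinarith [lam_sq a, sq_abs a]
  have hpos : 0 < Lam a + |a| := by nlinarith [one_le_lam a, abs_nonneg a]
  have h3 : Lam a - |a| = 1 / (Lam a + |a|) := by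
    rw [eq_div_iff hpos.ne']; linarith
  have h4 : Lam a + |a| ≤ 2 * (1 + |a|) := by nlinarith [lam_le a, abs_nonneg a]
  have h5 : 1 / (2 * (1 + |a|)) ≤ 1 / (Lam a + |a|) := one_div_le_one_div_of_le hpos h4
  linarith

lemma minkowski (a b : ℝ) : Real.sqrt (4 + (a + b) ^ 2) ≤ Lam a + Lam b := by
  have hmul : Lam a * Lam b = Real.sqrt ((1 + a ^ 2) * (1 + b ^ 2)) :=
    (Real.sqrt_mul (by positivity) _).symm
  have h1 : 1 + a * b ≤ Lam a * Lam b := by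
    rw [hmul]
    rcases le_or_gt (1 + a * b) 0 with h | h
    · exact h.trans (Real.sqrt_nonneg _)
    · rw [show (1:ℝ) + a * b = Real.sqrt ((1 + a * b) ^ 2) from (Real.sqrt_sq h.le).symm]
      exact Real.sqrt_le_sqrt (by nlinarith [sq_nonneg (a - b)])
  have h0 : 0 ≤ Lam a + Lam b := by nlinarith [one_le_lam a, one_le_lam b]
  rw [show Lam a + Lam b = Real.sqrt ((Lam a + Lam b) ^ 2) from (Real.sqrt_sq h0).symm]
  apply Real.sqrt_le_sqrt
  nlinarith [lam_sq a, lam_sq b, h1]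

lemma estB (a b : ℝ) : 1 / (2 * (1 + |a + b|)) ≤ Lam a + Lam b - Lam (a + b) := by
  set s := a + b with hs
  have h1 : Real.sqrt (4 + s ^ 2) ≤ Lam a + Lam b := minkowski a b
  have e1 : Real.sqrt (4 + s ^ 2) ^ 2 = 4 + s ^ 2 := Real.sq_sqrt (by positivity)
  have h2 : (Real.sqrt (4 + s ^ 2) - Lam s) * (Real.sqrt (4 + s ^ 2) + Lam s) = 3 := by
    nlinarith [e1, lam_sq s]
  have hb1 : Real.sqrt (4 + s ^ 2) ≤ 2 + |s| := by
    rw [show (2:ℝ) + |s| = Real.sqrt ((2 + |s|) ^ 2) from (Real.sqrt_sq (by positivity)).symm]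
    exact Real.sqrt_le_sqrt (by nlinarith [abs_nonneg s, sq_abs s])
  have hb2 : Lam s ≤ 1 + |s| := lam_le s
  have hpos : 0 < Real.sqrt (4 + s ^ 2) + Lam s := by
    nlinarith [Real.sqrt_nonneg (4 + s ^ 2), one_le_lam s]
  have h3 : Real.sqrt (4 + s ^ 2) - Lam s = 3 / (Real.sqrt (4 + s ^ 2) + Lam s) := by
    rw [eq_div_iff hpos.ne']; linarith
  have h4 : 1 / (2 * (1 + |s|)) ≤ 3 / (Real.sqrt (4 + s ^ 2) + Lam s) := by
    rw [div_le_div_iff₀ (by positivity) hpos]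
    nlinarith [abs_nonneg s]
  linarith

lemma main_est (a b : ℝ) :
    1 / (2 * (1 + min (|a + b|) (min (|a|) (|b|)))) ≤ Lam a + Lam b - Lam (a + b) := by
  have hA := estA a b
  have hB : 1 / (2 * (1 + |b|)) ≤ Lam a + Lam b - Lam (a + b) := by
    have := estA b a; rw [add_comm b a] at this; linarith
  have hS := estB a b
  rcases min_cases (|a + b|) (min (|a|) (|b|)) with ⟨h, _⟩ | ⟨h, _⟩
  · rw [h]; exact hS
  · rw [h]
    rcases min_cases (|a|) (|b|) with ⟨h2, _⟩ | ⟨h2, _⟩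
    · rw [h2]; exact hA
    · rw [h2]; exact hB

lemma main_inv (a b : ℝ) :
    |(-Lam (a + b) + Lam a + Lam b)|⁻¹ ≤ 2 * (1 + min (|a + b|) (min (|a|) (|b|))) := by
  set m := min (|a + b|) (min (|a|) (|b|)) with hm
  have hm0 : 0 ≤ m := le_min (abs_nonneg _) (le_min (abs_nonneg _) (abs_nonneg _))
  have hk := main_est a b
  have hq : 0 < 1 / (2 * (1 + m)) := by positivity
  have hF : 0 < -Lam (a + b) + Lam a + Lam b := by linarith
  rw [abs_of_pos hF]
  have := inv_anti₀ hq (by linarith : 1 / (2 * (1 + m)) ≤ -Lam (a + b) + Lam a + Lam b)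
  calc (-Lam (a + b) + Lam a + Lam b)⁻¹ ≤ (1 / (2 * (1 + m)))⁻¹ := this
    _ = 2 * (1 + m) := by rw [one_div, inv_inv]

lemma min_shuffle (x y z : ℝ) : min x (min y z) = min z (min x y) := by
  rw [min_comm y z, min_left_comm]

/-- Bound on the reciprocal of the quadratic phase:
    |Φ_{μ₁μ₂}(ξ₁,ξ₂)|⁻¹ ≤ C(1 + min{|ξ₁+ξ₂|, |ξ₁|, |ξ₂|}). -/
theorem two_phase_inv_bound :
    ∃ C : ℝ, 0 < C ∧ ∀ μ₁ μ₂ : ℝ, (μ₁ = 1 ∨ μ₁ = -1) → (μ₂ = 1 ∨ μ₂ = -1) →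
      ∀ ξ₁ ξ₂ : ℝ,
        |(-Lam (ξ₁ + ξ₂) + μ₁ * Lam ξ₁ + μ₂ * Lam ξ₂)|⁻¹ ≤
          C * (1 + min (|ξ₁ + ξ₂|) (min (|ξ₁|) (|ξ₂|))) := by
  refine ⟨2, by norm_num, ?_⟩
  rintro μ₁ μ₂ (rfl | rfl) (rfl | rfl) ξ₁ ξ₂
  · -- (+,+)
    simpa using main_inv ξ₁ ξ₂
  · -- (+,-) : |Φ| = |(-Lam ξ₁ + Lam ξ₂ + Lam (ξ₁+ξ₂))|, use main_inv (-ξ₂) (ξ₁+ξ₂)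
    have h := main_inv (-ξ₂) (ξ₁ + ξ₂)
    rw [show -ξ₂ + (ξ₁ + ξ₂) = ξ₁ by ring, lam_even, abs_neg ξ₂] at h
    have habs : |(-Lam (ξ₁ + ξ₂) + 1 * Lam ξ₁ + (-1) * Lam ξ₂)| =
        |(-Lam ξ₁ + Lam ξ₂ + Lam (ξ₁ + ξ₂))| := by
      rw [← abs_neg]; ring_nf
    have hmin : min (|ξ₁|) (min (|ξ₂|) (|ξ₁ + ξ₂|)) =
        min (|ξ₁ + ξ₂|) (min (|ξ₁|) (|ξ₂|)) := min_shuffle _ _ _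
    rw [habs]
    rw [hmin] at h
    exact h
  · -- (-,+) : use main_inv (-ξ₁) (ξ₁+ξ₂)
    have h := main_inv (-ξ₁) (ξ₁ + ξ₂)
    rw [show -ξ₁ + (ξ₁ + ξ₂) = ξ₂ by ring, lam_even, abs_neg ξ₁] at h
    have habs : |(-Lam (ξ₁ + ξ₂) + (-1) * Lam ξ₁ + 1 * Lam ξ₂)| =
        |(-Lam ξ₂ + Lam ξ₁ + Lam (ξ₁ + ξ₂))| := by
      rw [← abs_neg]; ring_nf
    have hmin : min (|ξ₂|) (min (|ξ₁|) (|ξ₁ + ξ₂|)) =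
        min (|ξ₁ + ξ₂|) (min (|ξ₁|) (|ξ₂|)) := by
      rw [min_shuffle, min_comm (|ξ₂|) (|ξ₁|)]
    rw [habs]
    rw [hmin] at h
    exact h
  · -- (-,-)
    have h3 : 3 ≤ |(-Lam (ξ₁ + ξ₂) + (-1) * Lam ξ₁ + (-1) * Lam ξ₂)| := by
      rw [← abs_neg]
      have : 3 ≤ Lam (ξ₁ + ξ₂) + Lam ξ₁ + Lam ξ₂ := by
        nlinarith [one_le_lam (ξ₁ + ξ₂), one_le_lam ξ₁, one_le_lam ξ₂]
      calc (3:ℝ) ≤ Lam (ξ₁ + ξ₂) + Lam ξ₁ + Lam ξ₂ := this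
        _ = -(-Lam (ξ₁ + ξ₂) + (-1) * Lam ξ₁ + (-1) * Lam ξ₂) := by ring
        _ ≤ |(-(-Lam (ξ₁ + ξ₂) + (-1) * Lam ξ₁ + (-1) * Lam ξ₂))| := le_abs_self _
    have hm0 : 0 ≤ min (|ξ₁ + ξ₂|) (min (|ξ₁|) (|ξ₂|)) :=
      le_min (abs_nonneg _) (le_min (abs_nonneg _) (abs_nonneg _))
    have hinv := inv_anti₀ (by norm_num : (0:ℝ) < 3) h3
    calc |(-Lam (ξ₁ + ξ₂) + (-1) * Lam ξ₁ + (-1) * Lam ξ₂)|⁻¹ ≤ (3:ℝ)⁻¹ := hinv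
      _ ≤ 2 * (1 + min (|ξ₁ + ξ₂|) (min (|ξ₁|) (|ξ₂|))) := by nlinarith
end

section
/- Bound for derivatives of the reciprocal two-phase: for μ₁,μ₂ ∈ {+1,-1}, every l ≥ 1 and all ξ₁,ξ₂ ∈ ℝ, |∂^l_{ξ₁,ξ₂} Φ_{μ₁μ₂}(ξ₁,ξ₂)| ≤ C_l · min{1, |Φ_{μ₁μ₂}(ξ₁,ξ₂)|}, where Φ_{μ₁μ₂}(ξ₁,ξ₂) = -Λ(ξ₁+ξ₂) + μ₁Λ(ξ₁) + μ₂Λ(ξ₂) and Λ(ξ)=√(1+ξ²), and ∂^l denotes any l-th order partial derivative in (ξ₁,ξ₂). -/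
/-- The quadratic phase Φ_{μ₁μ₂}(ξ₁,ξ₂) = -Λ(ξ₁+ξ₂) + μ₁Λ(ξ₁) + μ₂Λ(ξ₂). -/
noncomputable def Phi2 (μ₁ μ₂ ξ₁ ξ₂ : ℝ) : ℝ :=
  -Lam (ξ₁ + ξ₂) + μ₁ * Lam ξ₁ + μ₂ * Lam ξ₂

/-!
Two estimates drive the bound. First, `|Φ| ≥ (2 Λ(t))⁻¹` for every `t ∈ {ξ₁, ξ₂, ξ₁ + ξ₂}`:
up to sign and a linear change of variables each `Φ_{μ₁μ₂}` dominates
`Φ₊₊(a, b) = Λ(a) + Λ(b) - Λ(a + b)`, and `Λ(a + b) ≤ |a| + Λ(b)` while `Λ(a) - |a| ≥ (2 Λ(a))⁻¹`.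
Second, `Λ⁽ⁿ⁾ = O(Λ⁻¹)` for `n ≥ 2`, since `Λ⁽ⁿ⁺¹⁾` is a polynomial of degree `≤ n + 1` divided by
`Λ^(2n+1)`. Every partial derivative of order `≥ 2` of `Φ` is `±Λ⁽ⁿ⁾(ξ₁ + ξ₂)` plus possibly
`±Λ⁽ⁿ⁾(ξᵢ)`, so it is `O(min 1 |Φ|)`. At first order the slopes `ξ / Λ(ξ)` at points of equal sign
differ by at most `Λ(u)⁻¹ + Λ(v)⁻¹`, and at points of opposite sign `|Φ| ≥ 1`.
-/

lemma iteratedDeriv_iteratedDeriv {𝕜 F : Type*} [NontriviallyNormedField 𝕜]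
    [NormedAddCommGroup F] [NormedSpace 𝕜 F] (m k : ℕ) (f : 𝕜 → F) :
    iteratedDeriv m (iteratedDeriv k f) = iteratedDeriv (m + k) f := by
  simp only [iteratedDeriv_eq_iterate, Function.iterate_add_apply]

lemma Lam_pos (ξ : ℝ) : 0 < Lam ξ := Real.sqrt_pos.mpr (by positivity)

lemma Lam_sq (ξ : ℝ) : Lam ξ ^ 2 = 1 + ξ ^ 2 := Real.sq_sqrt (by positivity)

lemma one_le_Lam (ξ : ℝ) : 1 ≤ Lam ξ := by
  nlinarith [Lam_sq ξ, Lam_pos ξ, sq_nonneg ξ]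

lemma inv_Lam_le_one (ξ : ℝ) : (Lam ξ)⁻¹ ≤ 1 := inv_le_one_of_one_le₀ (one_le_Lam ξ)

@[simp]
lemma Lam_neg (ξ : ℝ) : Lam (-ξ) = Lam ξ := by simp [Lam]

lemma abs_le_Lam (ξ : ℝ) : |ξ| ≤ Lam ξ := by
  nlinarith [Lam_sq ξ, Lam_pos ξ, sq_abs ξ, abs_nonneg ξ]

lemma Lam_le_Lam_of_sq_le {a b : ℝ} (h : a ^ 2 ≤ b ^ 2) : Lam a ≤ Lam b :=
  Real.sqrt_le_sqrt (by linarith)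

lemma Lam_add_le (a b : ℝ) : Lam (a + b) ≤ |a| + Lam b := by
  rw [Lam, Real.sqrt_le_left (by positivity [Lam_pos b])]
  nlinarith [Lam_sq b, sq_abs a, abs_mul_abs_self a, abs_le_Lam b, neg_abs_le (a * b),
    le_abs_self (a * b), abs_mul a b, mul_le_mul_of_nonneg_left (abs_le_Lam b) (abs_nonneg a)]

lemma Phi2_comm (μ₁ μ₂ ξ₁ ξ₂ : ℝ) : Phi2 μ₁ μ₂ ξ₁ ξ₂ = Phi2 μ₂ μ₁ ξ₂ ξ₁ := by
  rw [Phi2, Phi2, add_comm ξ₂]; ring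

lemma Phi2_one_neg_one (ξ₁ ξ₂ : ℝ) : Phi2 1 (-1) ξ₁ ξ₂ = -Phi2 1 1 (-ξ₂) (ξ₂ + ξ₁) := by
  rw [Phi2, Phi2, neg_add_cancel_left, Lam_neg, add_comm ξ₂ ξ₁]; ring

lemma inv_Lam_le_two_mul_Phi2_one_one_left (a b : ℝ) : (Lam a)⁻¹ ≤ 2 * Phi2 1 1 a b := by
  have hdiff : (Lam a)⁻¹ ≤ 2 * (Lam a - |a|) := by
    rw [inv_le_iff_one_le_mul₀ (Lam_pos a)]
    nlinarith [Lam_sq a, abs_le_Lam a, sq_abs a]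
  have := Lam_add_le a b
  rw [Phi2]
  linarith

lemma inv_Lam_le_two_mul_Phi2_one_one (a b : ℝ) :
    (Lam a)⁻¹ ≤ 2 * Phi2 1 1 a b ∧ (Lam b)⁻¹ ≤ 2 * Phi2 1 1 a b ∧
      (Lam (a + b))⁻¹ ≤ 2 * Phi2 1 1 a b := by
  have ha := inv_Lam_le_two_mul_Phi2_one_one_left a b
  refine ⟨ha, by simpa only [Phi2_comm 1 1 b] using inv_Lam_le_two_mul_Phi2_one_one_left b a, ?_⟩
  rcases le_total (Lam a) (Lam (a + b)) with h | h
  · exact (inv_anti₀ (Lam_pos a) h).trans ha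
  · -- then `Phi2 1 1 a b ≥ Lam b ≥ 1`
    have := inv_Lam_le_one (a + b)
    have := one_le_Lam b
    rw [Phi2]
    linarith

lemma inv_Lam_le_two_mul_abs_Phi2 {μ₁ μ₂ : ℝ} (hμ₁ : μ₁ = 1 ∨ μ₁ = -1)
    (hμ₂ : μ₂ = 1 ∨ μ₂ = -1) {ξ₁ ξ₂ t : ℝ} (ht : t = ξ₁ ∨ t = ξ₂ ∨ t = ξ₁ + ξ₂) :
    (Lam t)⁻¹ ≤ 2 * |Phi2 μ₁ μ₂ ξ₁ ξ₂| := by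
  rcases hμ₁ with rfl | rfl <;> rcases hμ₂ with rfl | rfl
  · have := le_abs_self (Phi2 1 1 ξ₁ ξ₂)
    obtain ⟨h₁, h₂, h₃⟩ := inv_Lam_le_two_mul_Phi2_one_one ξ₁ ξ₂
    rcases ht with rfl | rfl | rfl <;> linarith
  · rw [Phi2_one_neg_one, abs_neg]
    have := le_abs_self (Phi2 1 1 (-ξ₂) (ξ₂ + ξ₁))
    obtain ⟨h₂, h₃, h₁⟩ := inv_Lam_le_two_mul_Phi2_one_one (-ξ₂) (ξ₂ + ξ₁)
    rw [Lam_neg] at h₂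
    rw [neg_add_cancel_left] at h₁
    rw [show Lam (ξ₂ + ξ₁) = Lam (ξ₁ + ξ₂) by rw [add_comm]] at h₃
    rcases ht with rfl | rfl | rfl <;> linarith
  · rw [Phi2_comm, Phi2_one_neg_one, abs_neg]
    have := le_abs_self (Phi2 1 1 (-ξ₁) (ξ₁ + ξ₂))
    obtain ⟨h₁, h₃, h₂⟩ := inv_Lam_le_two_mul_Phi2_one_one (-ξ₁) (ξ₁ + ξ₂)
    rw [Lam_neg] at h₁
    rw [neg_add_cancel_left] at h₂
    rcases ht with rfl | rfl | rfl <;> linarith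
  · have : Phi2 1 1 ξ₁ ξ₂ ≤ |Phi2 (-1) (-1) ξ₁ ξ₂| := by
      rw [← abs_neg]
      refine le_trans ?_ (le_abs_self _)
      simp only [Phi2]
      linarith [Lam_pos (ξ₁ + ξ₂)]
    obtain ⟨h₁, h₂, h₃⟩ := inv_Lam_le_two_mul_Phi2_one_one ξ₁ ξ₂
    rcases ht with rfl | rfl | rfl <;> linarith

lemma inv_Lam_le_two_mul_min_abs_Phi2 {μ₁ μ₂ : ℝ} (hμ₁ : μ₁ = 1 ∨ μ₁ = -1)
    (hμ₂ : μ₂ = 1 ∨ μ₂ = -1) {ξ₁ ξ₂ t : ℝ} (ht : t = ξ₁ ∨ t = ξ₂ ∨ t = ξ₁ + ξ₂) :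
    (Lam t)⁻¹ ≤ 2 * min 1 |Phi2 μ₁ μ₂ ξ₁ ξ₂| := by
  rcases min_cases 1 |Phi2 μ₁ μ₂ ξ₁ ξ₂| with ⟨h, -⟩ | ⟨h, -⟩ <;> rw [h]
  · linarith [inv_Lam_le_one t]
  · exact inv_Lam_le_two_mul_abs_Phi2 hμ₁ hμ₂ ht

lemma one_le_Phi2_one_one_of_mul_nonpos {a b : ℝ} (h : a * b ≤ 0) : 1 ≤ Phi2 1 1 a b := by
  rw [Phi2]
  rcases le_total (a ^ 2) (b ^ 2) with hab | hab
  · have : Lam (a + b) ≤ Lam b := Lam_le_Lam_of_sq_le (by nlinarith)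
    linarith [one_le_Lam a]
  · have : Lam (a + b) ≤ Lam a := Lam_le_Lam_of_sq_le (by nlinarith)
    linarith [one_le_Lam b]

lemma one_le_abs_Phi2_of_mul_neg {μ₁ μ₂ : ℝ} (hμ₁ : μ₁ = 1 ∨ μ₁ = -1)
    (hμ₂ : μ₂ = 1 ∨ μ₂ = -1) {ξ₁ ξ₂ : ℝ} (h : μ₁ * ξ₁ * (ξ₁ + ξ₂) < 0) :
    1 ≤ |Phi2 μ₁ μ₂ ξ₁ ξ₂| := by
  rcases hμ₁ with rfl | rfl <;> rcases hμ₂ with rfl | rfl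
  · exact (one_le_Phi2_one_one_of_mul_nonpos (by nlinarith [sq_nonneg ξ₁])).trans
      (le_abs_self _)
  · rw [Phi2_one_neg_one, abs_neg]
    exact (one_le_Phi2_one_one_of_mul_nonpos (by nlinarith [sq_nonneg (ξ₁ + ξ₂)])).trans
      (le_abs_self _)
  · rw [Phi2_comm, Phi2_one_neg_one, abs_neg]
    exact (one_le_Phi2_one_one_of_mul_nonpos (by linarith)).trans (le_abs_self _)
  · rw [← abs_neg]
    refine le_trans ?_ (le_abs_self _)
    simp only [Phi2]
    linarith [one_le_Lam ξ₁, Lam_pos ξ₂, Lam_pos (ξ₁ + ξ₂)]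

open scoped ContDiff in
lemma contDiff_Lam : ContDiff ℝ ∞ Lam :=
  ContDiff.sqrt (contDiff_const.add (contDiff_id.pow 2)) fun ξ => by positivity

lemma hasDerivAt_Lam (ξ : ℝ) : HasDerivAt Lam (ξ / Lam ξ) ξ := by
  convert ((hasDerivAt_pow 2 ξ).const_add 1).sqrt (by positivity) using 1
  · rfl
  · rw [Lam]
    field_simp
    norm_num [mul_comm]

lemma deriv_Lam (ξ : ℝ) : deriv Lam ξ = ξ / Lam ξ := (hasDerivAt_Lam ξ).deriv

open Polynomial in
lemma exists_iteratedDeriv_succ_Lam_eq (n : ℕ) :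
    ∃ q : ℝ[X], q.natDegree ≤ n + 1 ∧
      ∀ ξ, iteratedDeriv (n + 1) Lam ξ = q.eval ξ / Lam ξ ^ (2 * n + 1) := by
  induction n with
  | zero => exact ⟨X, by simp, fun ξ => by simp [deriv_Lam]⟩
  | succ n ih =>
    obtain ⟨q, hdeg, hq⟩ := ih
    refine ⟨derivative q * (1 + X ^ 2) - C (2 * n + 1 : ℝ) * (X * q), ?_, fun ξ => ?_⟩
    · refine (natDegree_sub_le _ _).trans (max_le ?_ ?_)
      · refine natDegree_mul_le.trans ?_
        have := natDegree_derivative_le q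
        have : (1 + X ^ 2 : ℝ[X]).natDegree ≤ 2 := by
          refine (natDegree_add_le _ _).trans ?_; simp
        omega
      · refine natDegree_C_mul_le _ _ |>.trans <| natDegree_mul_le.trans ?_
        simp only [natDegree_X]
        omega
    · have hL := Lam_pos ξ
      have hd := (q.hasDerivAt ξ).fun_div ((hasDerivAt_Lam ξ).fun_pow (2 * n + 1))
        (pow_pos hL _).ne'
      rw [iteratedDeriv_succ, funext hq, hd.deriv]
      simp only [eval_sub, eval_mul, eval_add, eval_pow, eval_X, eval_C, eval_one,
        Nat.add_sub_cancel, ← Lam_sq ξ]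
      field_simp
      push_cast
      ring

lemma Polynomial.abs_eval_le_mul_Lam_pow (p : Polynomial ℝ) {d : ℕ} (hd : p.natDegree ≤ d) :
    ∃ C, 0 < C ∧ ∀ ξ, |p.eval ξ| ≤ C * Lam ξ ^ d := by
  refine ⟨∑ i ∈ Finset.range (d + 1), |p.coeff i| + 1, by positivity, fun ξ => ?_⟩
  have hL := one_le_Lam ξ
  rw [p.eval_eq_sum_range' (Nat.lt_succ_of_le hd)]
  calc |∑ i ∈ Finset.range (d + 1), p.coeff i * ξ ^ i|
      ≤ ∑ i ∈ Finset.range (d + 1), |p.coeff i| * Lam ξ ^ d := by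
        refine (Finset.abs_sum_le_sum_abs _ _).trans (Finset.sum_le_sum fun i hi => ?_)
        rw [abs_mul, abs_pow]
        gcongr
        calc |ξ| ^ i ≤ Lam ξ ^ i := by gcongr; exact abs_le_Lam ξ
          _ ≤ Lam ξ ^ d := pow_le_pow_right₀ hL (Nat.lt_succ_iff.mp (Finset.mem_range.mp hi))
    _ ≤ (∑ i ∈ Finset.range (d + 1), |p.coeff i| + 1) * Lam ξ ^ d := by
        rw [← Finset.sum_mul]
        gcongr
        linarith

lemma abs_iteratedDeriv_Lam_le {n : ℕ} (hn : 2 ≤ n) :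
    ∃ C, 0 < C ∧ ∀ ξ, |iteratedDeriv n Lam ξ| ≤ C * (Lam ξ)⁻¹ := by
  obtain ⟨m, rfl⟩ : ∃ m, n = m + 1 := ⟨n - 1, by omega⟩
  obtain ⟨q, hdeg, hq⟩ := exists_iteratedDeriv_succ_Lam_eq m
  obtain ⟨C, hC, hqC⟩ := q.abs_eval_le_mul_Lam_pow hdeg
  refine ⟨C, hC, fun ξ => ?_⟩
  have hL := Lam_pos ξ
  have hLm : Lam ξ ≤ Lam ξ ^ m := le_self_pow₀ (one_le_Lam ξ) (by omega)
  rw [hq, abs_div, abs_of_pos (pow_pos hL _), div_le_iff₀ (pow_pos hL _)]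
  calc |q.eval ξ| ≤ C * Lam ξ ^ (m + 1) := hqC ξ
    _ = C * (Lam ξ)⁻¹ * (Lam ξ ^ (m + 1) * Lam ξ) := by field_simp
    _ ≤ C * (Lam ξ)⁻¹ * (Lam ξ ^ (m + 1) * Lam ξ ^ m) := by gcongr
    _ = C * (Lam ξ)⁻¹ * Lam ξ ^ (2 * m + 1) := by ring

lemma iteratedDeriv_Phi2_fst (μ₁ μ₂ η : ℝ) {n : ℕ} (hn : 0 < n) (ξ : ℝ) :
    iteratedDeriv n (fun x => Phi2 μ₁ μ₂ x η) ξ =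
      -iteratedDeriv n Lam (ξ + η) + μ₁ * iteratedDeriv n Lam ξ := by
  have hLam : ContDiff ℝ n Lam := contDiff_Lam.of_le (by exact_mod_cast le_top)
  have hPhi : (fun x => Phi2 μ₁ μ₂ x η) = fun x => μ₂ * Lam η + (-Lam (x + η) + μ₁ * Lam x) :=
    funext fun x => by rw [Phi2]; ring
  rw [hPhi, iteratedDeriv_const_add hn, iteratedDeriv_fun_add, iteratedDeriv_fun_neg,
    iteratedDeriv_comp_add_const, iteratedDeriv_const_mul_field]
  · exact (hLam.comp (contDiff_id.add contDiff_const)).neg.contDiffAt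
  · exact (contDiff_const.mul hLam).contDiffAt

lemma iteratedDeriv_iteratedDeriv_Phi2 (μ₁ μ₂ : ℝ) {l₁ l₂ : ℕ} (hl₁ : 0 < l₁) (hl₂ : 0 < l₂)
    (ξ₁ ξ₂ : ℝ) :
    iteratedDeriv l₁ (fun x => iteratedDeriv l₂ (fun y => Phi2 μ₁ μ₂ x y) ξ₂) ξ₁ =
      -iteratedDeriv (l₁ + l₂) Lam (ξ₁ + ξ₂) := by
  have hinner : (fun x => iteratedDeriv l₂ (fun y => Phi2 μ₁ μ₂ x y) ξ₂) =
      fun x => μ₂ * iteratedDeriv l₂ Lam ξ₂ + -iteratedDeriv l₂ Lam (ξ₂ + x) := by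
    funext x
    simp_rw [Phi2_comm μ₁ μ₂ x]
    rw [iteratedDeriv_Phi2_fst μ₂ μ₁ x hl₂]
    ring
  rw [hinner, iteratedDeriv_const_add hl₁, iteratedDeriv_fun_neg,
    iteratedDeriv_comp_const_add, iteratedDeriv_iteratedDeriv, add_comm ξ₁ ξ₂]

lemma abs_div_Lam_le_one (ξ : ℝ) : |ξ / Lam ξ| ≤ 1 := by
  rw [abs_div, abs_of_pos (Lam_pos ξ), div_le_one (Lam_pos ξ)]
  exact abs_le_Lam ξ

lemma one_sub_div_Lam_le {w : ℝ} (hw : 0 ≤ w) : 1 - w / Lam w ≤ (Lam w)⁻¹ := by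
  rw [sub_le_iff_le_add, inv_eq_one_div, ← add_div, le_div_iff₀ (Lam_pos w), one_mul]
  nlinarith [Lam_sq w, Lam_pos w]

lemma abs_div_Lam_sub_div_Lam_le {u v : ℝ} (h : 0 ≤ u * v) :
    |u / Lam u - v / Lam v| ≤ (Lam u)⁻¹ + (Lam v)⁻¹ := by
  have key : ∀ u v, 0 ≤ u → 0 ≤ v → |u / Lam u - v / Lam v| ≤ (Lam u)⁻¹ + (Lam v)⁻¹ := by
    intro u v hu hv
    have := one_sub_div_Lam_le hu
    have := one_sub_div_Lam_le hv
    have := (abs_le.mp (abs_div_Lam_le_one u)).2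
    have := (abs_le.mp (abs_div_Lam_le_one v)).2
    rw [abs_sub_le_iff]
    constructor <;> linarith [div_nonneg hu (Lam_pos u).le, div_nonneg hv (Lam_pos v).le]
  rcases mul_nonneg_iff.mp h with ⟨hu, hv⟩ | ⟨hu, hv⟩
  · exact key u v hu hv
  · simpa only [Lam_neg, neg_div, neg_sub_neg, abs_sub_comm] using
      key (-u) (-v) (neg_nonneg.mpr hu) (neg_nonneg.mpr hv)

lemma mul_div_Lam_eq {μ : ℝ} (hμ : μ = 1 ∨ μ = -1) (ξ : ℝ) :
    μ * (ξ / Lam ξ) = μ * ξ / Lam (μ * ξ) := by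
  rcases hμ with rfl | rfl <;> simp [neg_div]

lemma abs_deriv_Phi2_fst_le {μ₁ μ₂ : ℝ} (hμ₁ : μ₁ = 1 ∨ μ₁ = -1) (hμ₂ : μ₂ = 1 ∨ μ₂ = -1)
    (ξ η : ℝ) : |-deriv Lam (ξ + η) + μ₁ * deriv Lam ξ| ≤ 4 * min 1 |Phi2 μ₁ μ₂ ξ η| := by
  rw [deriv_Lam, deriv_Lam, mul_div_Lam_eq hμ₁]
  have hLam : Lam (μ₁ * ξ) = Lam ξ := by rcases hμ₁ with rfl | rfl <;> simp
  rcases le_or_gt 0 (μ₁ * ξ * (ξ + η)) with h | h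
  · have h₁ := inv_Lam_le_two_mul_min_abs_Phi2 hμ₁ hμ₂ (t := ξ) (ξ₂ := η) (.inl rfl)
    have h₂ := inv_Lam_le_two_mul_min_abs_Phi2 hμ₁ hμ₂ (t := ξ + η) (.inr (.inr rfl))
    have := abs_div_Lam_sub_div_Lam_le h
    rw [← hLam] at h₁
    rw [neg_add_eq_sub]
    linarith
  · -- opposite signs: the slopes may differ by up to 2, but then `|Phi2| ≥ 1`
    rw [min_eq_left (one_le_abs_Phi2_of_mul_neg hμ₁ hμ₂ h)]
    have := abs_div_Lam_le_one (ξ + η)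
    have := abs_div_Lam_le_one (μ₁ * ξ)
    calc |-((ξ + η) / Lam (ξ + η)) + μ₁ * ξ / Lam (μ₁ * ξ)|
        ≤ |(ξ + η) / Lam (ξ + η)| + |μ₁ * ξ / Lam (μ₁ * ξ)| := by
          simpa only [abs_neg] using abs_add_le (-((ξ + η) / Lam (ξ + η))) _
      _ ≤ 4 * 1 := by linarith

lemma abs_iteratedDeriv_Phi2_fst_le {μ₁ μ₂ : ℝ} (hμ₁ : μ₁ = 1 ∨ μ₁ = -1)
    (hμ₂ : μ₂ = 1 ∨ μ₂ = -1) {n : ℕ} (hn : 0 < n) :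
    ∃ C, 0 < C ∧ ∀ ξ η, |iteratedDeriv n (fun x => Phi2 μ₁ μ₂ x η) ξ| ≤
      C * min 1 |Phi2 μ₁ μ₂ ξ η| := by
  simp_rw [iteratedDeriv_Phi2_fst μ₁ μ₂ _ hn]
  rcases (show n = 1 ∨ 2 ≤ n by omega) with rfl | hn₂
  · simp only [iteratedDeriv_one]
    exact ⟨4, by norm_num, abs_deriv_Phi2_fst_le hμ₁ hμ₂⟩
  obtain ⟨A, hA, hAbound⟩ := abs_iteratedDeriv_Lam_le hn₂
  refine ⟨4 * A, by positivity, fun ξ η => ?_⟩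
  have h₁ := inv_Lam_le_two_mul_min_abs_Phi2 hμ₁ hμ₂ (t := ξ) (ξ₂ := η) (.inl rfl)
  have h₂ := inv_Lam_le_two_mul_min_abs_Phi2 hμ₁ hμ₂ (t := ξ + η) (.inr (.inr rfl))
  have hμ : |μ₁| = 1 := by rcases hμ₁ with rfl | rfl <;> simp
  calc |-iteratedDeriv n Lam (ξ + η) + μ₁ * iteratedDeriv n Lam ξ|
      ≤ |iteratedDeriv n Lam (ξ + η)| + |iteratedDeriv n Lam ξ| := by
        simpa only [abs_neg, abs_mul, hμ, one_mul] using
          abs_add_le (-iteratedDeriv n Lam (ξ + η)) (μ₁ * iteratedDeriv n Lam ξ)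
    _ ≤ A * (Lam (ξ + η))⁻¹ + A * (Lam ξ)⁻¹ := add_le_add (hAbound _) (hAbound _)
    _ ≤ 4 * A * min 1 |Phi2 μ₁ μ₂ ξ η| := by nlinarith

lemma abs_iteratedDeriv_iteratedDeriv_Phi2_le {μ₁ μ₂ : ℝ} (hμ₁ : μ₁ = 1 ∨ μ₁ = -1)
    (hμ₂ : μ₂ = 1 ∨ μ₂ = -1) {l₁ l₂ : ℕ} (hl₁ : 0 < l₁) (hl₂ : 0 < l₂) :
    ∃ C, 0 < C ∧ ∀ ξ₁ ξ₂,
      |iteratedDeriv l₁ (fun x => iteratedDeriv l₂ (fun y => Phi2 μ₁ μ₂ x y) ξ₂) ξ₁| ≤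
        C * min 1 |Phi2 μ₁ μ₂ ξ₁ ξ₂| := by
  obtain ⟨A, hA, hAbound⟩ := abs_iteratedDeriv_Lam_le (n := l₁ + l₂) (by omega)
  refine ⟨2 * A, by positivity, fun ξ₁ ξ₂ => ?_⟩
  rw [iteratedDeriv_iteratedDeriv_Phi2 μ₁ μ₂ hl₁ hl₂, abs_neg]
  have := inv_Lam_le_two_mul_min_abs_Phi2 hμ₁ hμ₂ (t := ξ₁ + ξ₂) (.inr (.inr rfl))
  nlinarith [hAbound (ξ₁ + ξ₂)]

/-- Every l-th order partial derivative (l = l₁ + l₂ ≥ 1) of the two-phase Φ_{μ₁μ₂}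
    is bounded by a constant (depending only on l₁, l₂) times min{1, |Φ_{μ₁μ₂}|}. -/
theorem deriv_two_phase_bound (μ₁ μ₂ : ℝ)
    (hμ₁ : μ₁ = 1 ∨ μ₁ = -1) (hμ₂ : μ₂ = 1 ∨ μ₂ = -1)
    (l₁ l₂ : ℕ) (hl : 1 ≤ l₁ + l₂) :
    ∃ C : ℝ, 0 < C ∧ ∀ ξ₁ ξ₂ : ℝ,
      |iteratedDeriv l₁ (fun x => iteratedDeriv l₂ (fun y => Phi2 μ₁ μ₂ x y) ξ₂) ξ₁| ≤
        C * min 1 |Phi2 μ₁ μ₂ ξ₁ ξ₂| := by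
  rcases Nat.eq_zero_or_pos l₂ with rfl | hl₂
  · simpa only [iteratedDeriv_zero] using abs_iteratedDeriv_Phi2_fst_le hμ₁ hμ₂ (n := l₁) hl
  rcases Nat.eq_zero_or_pos l₁ with rfl | hl₁
  · obtain ⟨C, hC, hbound⟩ := abs_iteratedDeriv_Phi2_fst_le hμ₂ hμ₁ hl₂
    refine ⟨C, hC, fun ξ₁ ξ₂ => ?_⟩
    simpa only [iteratedDeriv_zero, ← Phi2_comm] using hbound ξ₂ ξ₁
  exact abs_iteratedDeriv_iteratedDeriv_Phi2_le hμ₁ hμ₂ hl₁ hl₂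
end
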